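/- arXiv:1808.02545 — 4 statements merged into one kernel-verified Lean document; each statement's English description precedes it below -/
import Mathlib

section
/- Let W_b be a binding subwalk of an optimal closed walk W*(k) (a closed subwalk with terminus d whose travel time equals the optimal revisit time R*(k)). Then every target is visited at least once in W_b. -/
/-- A closed walk with `k` visits on `n` targets, modeled as a `k`-periodic
sequence of targets in which consecutive visits are distinct and every
target is visited at least once in each period. -/
structure CWalk (n k : ℕ) where
  seq : ℕ → Fin n
  periodic : ∀ i, seq (i + k) = seq i
  step : ∀ i, seq i ≠ seq (i + 1)
  covers : ∀ d : Fin n, ∃ i < k, seq i = d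

namespace CWalk

/-- Travel time from the `i`-th to the `j`-th visit. -/
noncomputable def tt {n k : ℕ} (c : Fin n → Fin n → ℝ) (W : CWalk n k) (i j : ℕ) : ℝ :=
  ∑ t ∈ Finset.Ico i j, c (W.seq t) (W.seq (t + 1))

/-- Duration of one period of the walk. -/
noncomputable def duration {n k : ℕ} (c : Fin n → Fin n → ℝ) (W : CWalk n k) : ℝ :=
  W.tt c 0 k

/-- Revisit time of target `d`: the maximum time between consecutive visits to `d`. -/
noncomputable def RT {n k : ℕ} (c : Fin n → Fin n → ℝ) (W : CWalk n k) (d : Fin n) : ℝ :=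
  sSup {T : ℝ | ∃ i j : ℕ, i < j ∧ W.seq i = d ∧ W.seq j = d ∧
    (∀ t, i < t → t < j → W.seq t ≠ d) ∧ T = W.tt c i j}

/-- Revisit time of the walk: maximum revisit time over all targets. -/
noncomputable def R {n k : ℕ} (c : Fin n → Fin n → ℝ) (W : CWalk n k) : ℝ :=
  sSup {T : ℝ | ∃ d : Fin n, T = W.RT c d}

end CWalk

/-- Optimal revisit time over all closed walks with `k` visits. -/
noncomputable def Rstar (n : ℕ) (c : Fin n → Fin n → ℝ) (k : ℕ) : ℝ :=
  sInf {T : ℝ | ∃ W : CWalk n k, T = W.R c}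

/-- Optimal TSP tour length: minimal duration of a closed walk with `n` visits
(each target is then visited exactly once). -/
noncomputable def TSPstar (n : ℕ) (c : Fin n → Fin n → ℝ) : ℝ :=
  sInf {T : ℝ | ∃ W : CWalk n n, T = W.duration c}

/-!
If a target `u` is missed on `[a, b]`, then by periodicity it is missed on `[a + k, b + k]`, and
the return of `u` that straddles position `a + k` starts before `a + k` and ends after `b + k`.
Since every step costs a positive amount, that return takes strictly longer than `tt a b`, so
`tt a b < RT u ≤ R = R*`, contradicting that the subwalk on `[a, b]` is binding.
-/

namespace CWalk

variable {n k : ℕ} (c : Fin n → Fin n → ℝ) (W : CWalk n k)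

lemma seq_add_mul (t m : ℕ) : W.seq (t + m * k) = W.seq t :=
  Function.Periodic.nat_mul W.periodic m t

lemma tt_add {i j l : ℕ} (hij : i ≤ j) (hjl : j ≤ l) :
    W.tt c i j + W.tt c j l = W.tt c i l :=
  Finset.sum_Ico_consecutive _ hij hjl

lemma tt_add_period (i j : ℕ) : W.tt c (i + k) (j + k) = W.tt c i j := by
  simp only [tt, ← Finset.sum_Ico_add', add_right_comm _ k 1, W.periodic]

lemma tt_self_add_period (i : ℕ) : W.tt c i (i + k) = W.duration c := by
  induction i with
  | zero => simp [duration]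
  | succ i ih =>
    have hfirst :
        W.tt c i (i + 1 + k) = c (W.seq i) (W.seq (i + 1)) + W.tt c (i + 1) (i + 1 + k) :=
      Finset.sum_eq_sum_Ico_succ_bot (by omega) _
    have hlast : W.tt c i (i + 1 + k) = W.tt c i (i + k) + c (W.seq i) (W.seq (i + 1)) := by
      rw [add_right_comm, tt, Finset.sum_Ico_succ_top (by omega), add_right_comm, W.periodic,
        W.periodic]
      rfl
    linarith

variable {c}

lemma tt_le_tt_right (hc : ∀ u v : Fin n, u ≠ v → 0 < c u v) (i : ℕ) {j l : ℕ} (hjl : j ≤ l) :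
    W.tt c i j ≤ W.tt c i l :=
  Finset.sum_le_sum_of_subset_of_nonneg (Finset.Ico_subset_Ico_right hjl)
    fun t _ _ => (hc _ _ (W.step t)).le

lemma tt_lt_tt (hc : ∀ u v : Fin n, u ≠ v → 0 < c u v) {i j p q : ℕ} (hip : i < p) (hpj : p ≤ j)
    (hqj : q ≤ j) : W.tt c p q < W.tt c i j := by
  have hpos : 0 < W.tt c i p :=
    Finset.sum_pos (fun t _ => hc _ _ (W.step t)) ⟨i, Finset.mem_Ico.2 ⟨le_rfl, hip⟩⟩
  calc W.tt c p q ≤ W.tt c p j := W.tt_le_tt_right hc p hqj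
    _ < W.tt c i p + W.tt c p j := lt_add_of_pos_left _ hpos
    _ = W.tt c i j := W.tt_add c hip.le hpj

lemma tt_le_RT (hc : ∀ u v : Fin n, u ≠ v → 0 < c u v) {u : Fin n} {i j : ℕ} (hij : i < j)
    (hi : W.seq i = u) (hj : W.seq j = u) (hgap : ∀ t, i < t → t < j → W.seq t ≠ u) :
    W.tt c i j ≤ W.RT c u := by
  refine le_csSup ⟨W.duration c, ?_⟩ ⟨i, j, hij, hi, hj, hgap, rfl⟩
  rintro _ ⟨i', j', hij', hi', -, hgap', rfl⟩
  obtain ⟨_, hk, -⟩ := W.covers u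
  have hj' : j' ≤ i' + k := by
    by_contra! h
    exact hgap' (i' + k) (by omega) h (by rw [W.periodic, hi'])
  exact (W.tt_le_tt_right hc i' hj').trans (W.tt_self_add_period c i').le

lemma RT_le_R (u : Fin n) : W.RT c u ≤ W.R c := by
  refine le_csSup ((Set.finite_range fun d => W.RT c d).bddAbove.mono ?_) ⟨u, rfl⟩
  rintro _ ⟨d, rfl⟩
  exact ⟨d, rfl⟩

lemma exists_return_around {u : Fin n} {i₀ p : ℕ} (hi₀p : i₀ < p) (hi₀ : W.seq i₀ = u) :
    ∃ i j, i < p ∧ p ≤ j ∧ W.seq i = u ∧ W.seq j = u ∧ ∀ t, i < t → t < j → W.seq t ≠ u := by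
  obtain ⟨_, hk, -⟩ := W.covers u
  have hlater : ∃ j, p ≤ j ∧ W.seq j = u :=
    ⟨i₀ + p * k, by nlinarith, by rw [W.seq_add_mul, hi₀]⟩
  set i := Nat.findGreatest (fun t => W.seq t = u) (p - 1)
  have hi : W.seq i = u := Nat.findGreatest_spec (P := fun t => W.seq t = u) (by omega) hi₀
  have hip : i < p := by have := Nat.findGreatest_le (P := fun t => W.seq t = u) (p - 1); omega
  obtain ⟨hpj, hj⟩ := Nat.find_spec hlater
  refine ⟨i, Nat.find hlater, hip, hpj, hi, hj, fun t hit htj ht => ?_⟩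
  rcases lt_or_ge t p with htp | hpt
  · exact Nat.findGreatest_is_greatest hit (by omega) ht
  · exact Nat.find_min hlater htj ⟨hpt, ht⟩

lemma tt_lt_RT_of_forall_ne (hc : ∀ u v : Fin n, u ≠ v → 0 < c u v) {u : Fin n} {a b : ℕ}
    (hu : ∀ t, a ≤ t → t ≤ b → W.seq t ≠ u) : W.tt c a b < W.RT c u := by
  obtain ⟨i₀, hi₀k, hi₀⟩ := W.covers u
  obtain ⟨i, j, hi, hj, hiu, hju, hgap⟩ := W.exists_return_around (p := a + k) (by omega) hi₀
  have hbj : b + k ≤ j := by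
    by_contra! h
    exact hu (j - k) (by omega) (by omega)
      (by rw [← W.periodic, Nat.sub_add_cancel (by omega), hju])
  calc W.tt c a b = W.tt c (a + k) (b + k) := (W.tt_add_period c a b).symm
    _ < W.tt c i j := W.tt_lt_tt hc hi hj hbj
    _ ≤ W.RT c u := W.tt_le_RT hc (by omega) hiu hju hgap

end CWalk

theorem binding_subwalk_visits_all_targets_general
    (n k : ℕ)
    (c : Fin n → Fin n → ℝ)
    (hc : ∀ u v : Fin n, u ≠ v → 0 < c u v)
    (W : CWalk n k) (hopt : W.R c = Rstar n c k)
    (a b : ℕ)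
    (hbind : W.tt c a b = Rstar n c k) :
    ∀ u : Fin n, ∃ t, a ≤ t ∧ t ≤ b ∧ W.seq t = u := by
  intro u
  by_contra! hu
  have := (W.tt_lt_RT_of_forall_ne hc hu).trans_le (W.RT_le_R u)
  rw [hopt, hbind] at this
  exact lt_irrefl _ this

/-- Every binding subwalk of an optimal closed walk visits every target. -/
theorem binding_subwalk_visits_all_targets
    (n k : ℕ) (hn : 2 ≤ n) (hk : n ≤ k)
    (c : Fin n → Fin n → ℝ)
    (hc : ∀ u v : Fin n, u ≠ v → 0 < c u v)
    (htri : ∀ u v w : Fin n, c u w ≤ c u v + c v w)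
    (W : CWalk n k) (hopt : W.R c = Rstar n c k)
    (d : Fin n) (a b : ℕ) (hab : a < b)
    (ha : W.seq a = d) (hb : W.seq b = d)
    (hmid : ∀ t, a < t → t < b → W.seq t ≠ d)
    (hbind : W.tt c a b = Rstar n c k) :
    ∀ u : Fin n, ∃ t, a ≤ t ∧ t ≤ b ∧ W.seq t = u :=
  binding_subwalk_visits_all_targets_general n k c hc W hopt a b hbind
end

section
/- In any closed walk with k = pn + q visits on n targets (p ≥ 1, 0 ≤ q ≤ n−1), if every closed subwalk with a terminus has at most n + ⌈q/p⌉ − 1 visits, then every target is visited at least p + 1 times, contradicting the total count k < (p+1)n; hence some closed subwalk with a terminus has at least n + ⌈q/p⌉ visits. -/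
/-! A gap bound `M` between consecutive visits to `d`, iterated from one visit, packs `p + 1`
visits of `d` into any `p * M + 1` consecutive steps. For `M = n + ⌈q/p⌉ - 1` this is fewer
than the `k = p n + q` steps of one period, so every target would be visited `p + 1` times per
period and the walk would have at least `(p + 1) n > k` visits. -/

open Finset Function

variable {α : Type*}

def IsClosedSubwalk (f : ℕ → α) (d : α) (i j : ℕ) : Prop :=
  i < j ∧ f i = d ∧ f j = d ∧ ∀ t, i < t → t < j → f t ≠ d

lemma exists_isClosedSubwalk {f : ℕ → α} {d : α} {i j : ℕ} (hi : f i = d) (hij : i < j)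
    (hj : f j = d) : ∃ j', IsClosedSubwalk f d i j' := by
  classical
  have hex : ∃ j, i < j ∧ f j = d := ⟨j, hij, hj⟩
  obtain ⟨hlt, hvisit⟩ := Nat.find_spec hex
  exact ⟨Nat.find hex, hlt, hi, hvisit, fun t hit htj ht => Nat.find_min hex htj ⟨hit, ht⟩⟩

lemma le_card_filter_Ico_of_isClosedSubwalk_le [DecidableEq α] {f : ℕ → α} {d : α} {M : ℕ}
    (hrec : ∀ i, ∃ j, i < j ∧ f j = d) (hM : ∀ i j, IsClosedSubwalk f d i j → j - i ≤ M) :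
    ∀ t a, f a = d → t + 1 ≤ #{i ∈ Ico a (a + t * M + 1) | f i = d} := by
  intro t
  induction t with
  | zero => exact fun a ha => card_pos.mpr ⟨a, by simp [ha]⟩
  | succ t ih =>
    intro a ha
    obtain ⟨b, hab, hb⟩ := hrec a
    obtain ⟨j, hsub⟩ := exists_isClosedSubwalk ha hab hb
    have haj : a < j := hsub.1
    have hjM : j - a ≤ M := hM a j hsub
    have ha_notMem : a ∉ ({i ∈ Ico j (j + t * M + 1) | f i = d} : Finset ℕ) := by
      simp [haj]
    calc t + 1 + 1 ≤ #(insert a {i ∈ Ico j (j + t * M + 1) | f i = d}) := by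
          rw [card_insert_of_notMem ha_notMem]
          exact Nat.succ_le_succ (ih j hsub.2.2.1)
      _ ≤ #{i ∈ Ico a (a + (t + 1) * M + 1) | f i = d} := by
          apply card_le_card
          intro i
          simp only [mem_insert, mem_filter, mem_Ico]
          rintro (rfl | ⟨⟨hji, hi⟩, hfi⟩)
          · exact ⟨⟨le_rfl, by omega⟩, ha⟩
          · exact ⟨⟨by omega, by rw [add_mul]; omega⟩, hfi⟩

lemma le_card_filter_range_of_isClosedSubwalk_le [DecidableEq α] {f : ℕ → α} {d : α}
    {k p M : ℕ} (hf : Periodic f k) (hd : ∃ a, f a = d)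
    (hM : ∀ i j, IsClosedSubwalk f d i j → j - i ≤ M) (hpM : p * M < k) :
    p + 1 ≤ #{i ∈ range k | f i = d} := by
  obtain ⟨a, ha⟩ := hd
  have hk : 0 < k := Nat.zero_lt_of_lt hpM
  have hrec : ∀ i, ∃ j, i < j ∧ f j = d := fun i =>
    ⟨a + (i + 1) * k, by nlinarith, (hf.nat_mul (i + 1) a).trans ha⟩
  calc p + 1 ≤ #{i ∈ Ico a (a + p * M + 1) | f i = d} :=
        le_card_filter_Ico_of_isClosedSubwalk_le hrec hM p a ha
    _ ≤ #{i ∈ Ico a (a + k) | f i = d} :=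
        card_le_card (filter_subset_filter _ (Ico_subset_Ico_right (by omega)))
    _ = #{i ∈ range k | f i = d} := by
        rw [Nat.filter_Ico_card_eq_of_periodic a k (f · = d) (fun i => by simp only [hf i]),
          Nat.count_eq_card_filter_range]

lemma sum_card_filter_range_eq [Fintype α] [DecidableEq α] (f : ℕ → α) (k : ℕ) :
    ∑ d, #{i ∈ range k | f i = d} = k :=
  ((card_eq_sum_card_fiberwise fun i _ => mem_univ (f i)).symm).trans (card_range k)

lemma mul_add_ceil_div_sub_one_lt {n p q : ℕ} (hn : 0 < n) (hp : 0 < p) :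
    p * (n + (q + p - 1) / p - 1) < p * n + q := by
  set c := (q + p - 1) / p
  have hceil : c * p ≤ q + p - 1 := Nat.div_mul_le_self _ _
  obtain ⟨m, rfl⟩ : ∃ m, n = m + 1 := ⟨n - 1, by omega⟩
  calc p * (m + 1 + c - 1) = p * m + c * p := by
        rw [add_right_comm, Nat.add_sub_cancel, mul_add, mul_comm p c]
    _ < p * m + (q + p) := by omega
    _ = p * (m + 1) + q := by ring

theorem subwalk_pigeonhole_general
    (n p q k : ℕ) (hp : 1 ≤ p) (hq : q ≤ n - 1)
    (hk : k = p * n + q) (W : CWalk n k) :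
    ((∀ (d : Fin n) (i j : ℕ), i < j → W.seq i = d → W.seq j = d →
        (∀ t, i < t → t < j → W.seq t ≠ d) → j - i ≤ n + (q + p - 1) / p - 1) →
      ∀ d : Fin n, p + 1 ≤ ((Finset.range k).filter (fun i => W.seq i = d)).card) ∧
    (∃ (d : Fin n) (i j : ℕ), i < j ∧ W.seq i = d ∧ W.seq j = d ∧
      (∀ t, i < t → t < j → W.seq t ≠ d) ∧ n + (q + p - 1) / p ≤ j - i) := by
  have hn : 0 < n := (W.seq 0).pos
  have hvisits : (∀ (d : Fin n) (i j : ℕ), i < j → W.seq i = d → W.seq j = d →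
        (∀ t, i < t → t < j → W.seq t ≠ d) → j - i ≤ n + (q + p - 1) / p - 1) →
      ∀ d : Fin n, p + 1 ≤ #{i ∈ range k | W.seq i = d} := fun hgap d =>
    le_card_filter_range_of_isClosedSubwalk_le W.periodic ((W.covers d).imp fun _ h => h.2)
      (fun i j h => hgap d i j h.1 h.2.1 h.2.2.1 h.2.2.2)
      (hk ▸ mul_add_ceil_div_sub_one_lt hn hp)
  refine ⟨hvisits, ?_⟩
  by_contra! hshort
  have hcount := hvisits fun d i j hij hi hj hgap =>
    Nat.le_sub_one_of_lt (hshort d i j hij hi hj hgap)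
  have : n * (p + 1) ≤ k :=
    calc n * (p + 1) = ∑ _d : Fin n, (p + 1) := by simp
      _ ≤ ∑ d, #{i ∈ range k | W.seq i = d} := sum_le_sum fun d _ => hcount d
      _ = k := sum_card_filter_range_eq W.seq k
  rw [hk, mul_add, mul_comm] at this
  omega

/-- if every closed subwalk with a terminus of a walk with
`k = p n + q` visits has at most `n + ⌈q/p⌉ - 1` visits, then every target is
visited at least `p + 1` times per period; hence some closed subwalk with a
terminus has at least `n + ⌈q/p⌉` visits. -/
theorem subwalk_pigeonhole
    (n p q k : ℕ) (hn : 2 ≤ n) (hp : 1 ≤ p) (hq : q ≤ n - 1)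
    (hk : k = p * n + q) (W : CWalk n k) :
    ((∀ (d : Fin n) (i j : ℕ), i < j → W.seq i = d → W.seq j = d →
        (∀ t, i < t → t < j → W.seq t ≠ d) → j - i ≤ n + (q + p - 1) / p - 1) →
      ∀ d : Fin n, p + 1 ≤ ((Finset.range k).filter (fun i => W.seq i = d)).card) ∧
    (∃ (d : Fin n) (i j : ℕ), i < j ∧ W.seq i = d ∧ W.seq j = d ∧
      (∀ t, i < t → t < j → W.seq t ≠ d) ∧ n + (q + p - 1) / p ≤ j - i) :=
  subwalk_pigeonhole_general n p q k hp hq hk W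
end

section
/- Let W be a closed walk with binding subwalk W_b, so that W = S_1 ∘ W_b ∘ S_2, and let W'_b be a closed walk obtained from W_b by shortcutting some visits while retaining the last visit to each target. Then the walk W̄ = S_1 ∘ W_b ∘ W'_b ∘ S_2 satisfies R(W̄) = R(W). -/
/-!
Let `u` be a target and consider two consecutive visits to `u` in `W̄`. If both lie in `W'_b`,
the triangle inequality bounds the time between them by the duration of `W_b`, which is `R(W)`.
If the first lies in `W'_b` and the second beyond it, then, since `W'_b` keeps the last visit of
`W_b` to `u`, the time between them is at most that of a stretch of `W` that starts at a visit to
`u` and does not return to `u`, hence at most `R(W)`. If the first lies in `S₂ ∘ S₁ ∘ W_b`, the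
second is either in the same stretch of `W`, or in the next copy of `W'_b` and then the two visits
fit inside `W_b`. Conversely, `W_b` is still a stretch between consecutive visits to `d` in `W̄`.
-/
namespace CWalk

variable {n κ κ' k m : ℕ} {c : Fin n → Fin n → ℝ}

structure IsGap (V : CWalk n κ) (u : Fin n) (i j : ℕ) : Prop where
  lt : i < j
  left : V.seq i = u
  right : V.seq j = u
  ne : ∀ t, i < t → t < j → V.seq t ≠ u

theorem IsGap.right_le {V : CWalk n κ} {u : Fin n} {i j p : ℕ} (h : V.IsGap u i j)
    (hp : V.seq p = u) (hip : i < p) : j ≤ p :=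
  not_lt.1 fun hpj => h.ne p hip hpj hp

theorem IsGap.le_left {V : CWalk n κ} {u : Fin n} {i j p : ℕ} (h : V.IsGap u i j)
    (hp : V.seq p = u) (hpj : p < j) : p ≤ i :=
  not_lt.1 fun hip => h.ne p hip hpj hp

theorem isGap_add_iff {V : CWalk n κ} {u : Fin n} {i j L : ℕ}
    (hL : Function.Periodic V.seq L) : V.IsGap u (i + L) (j + L) ↔ V.IsGap u i j := by
  constructor
  · rintro ⟨hij, hi, hj, hne⟩
    exact ⟨by omega, (hL i).symm.trans hi, (hL j).symm.trans hj,
      fun t h₁ h₂ => hL t ▸ hne (t + L) (by omega) (by omega)⟩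
  · rintro ⟨hij, hi, hj, hne⟩
    refine ⟨by omega, (hL i).trans hi, (hL j).trans hj, fun t h₁ h₂ => ?_⟩
    obtain ⟨t, rfl⟩ : ∃ t', t = t' + L := ⟨t - L, by omega⟩
    rw [hL]
    exact hne t (by omega) (by omega)

theorem seq_periodic (V : CWalk n κ) : Function.Periodic V.seq κ :=
  V.periodic

theorem seq_periodic_mul (V : CWalk n κ) (q : ℕ) : Function.Periodic V.seq (q * κ) := by
  simpa using V.seq_periodic.nat_mul q

theorem tt_add_tt (V : CWalk n κ) {i j l : ℕ} (hij : i ≤ j) (hjl : j ≤ l) :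
    V.tt c i j + V.tt c j l = V.tt c i l :=
  Finset.sum_Ico_consecutive _ hij hjl

theorem tt_succ (V : CWalk n κ) {i j : ℕ} (hij : i ≤ j) :
    V.tt c i (j + 1) = V.tt c i j + c (V.seq j) (V.seq (j + 1)) :=
  Finset.sum_Ico_succ_top hij _

theorem tt_mono (V : CWalk n κ) (hc : ∀ u v, u ≠ v → 0 ≤ c u v) {i i' j j' : ℕ}
    (hi : i' ≤ i) (hj : j ≤ j') : V.tt c i j ≤ V.tt c i' j' :=
  Finset.sum_le_sum_of_subset_of_nonneg (Finset.Ico_subset_Ico hi hj)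
    fun t _ _ => hc _ _ (V.step t)

theorem tt_nonneg (V : CWalk n κ) (hc : ∀ u v, u ≠ v → 0 ≤ c u v) (i j : ℕ) :
    0 ≤ V.tt c i j :=
  Finset.sum_nonneg fun t _ => hc _ _ (V.step t)

theorem tt_add_eq_tt (V : CWalk n κ) (V' : CWalk n κ') (o : ℕ) {i j : ℕ}
    (h : ∀ t, i ≤ t → t ≤ j → V'.seq (t + o) = V.seq t) :
    V'.tt c (i + o) (j + o) = V.tt c i j := by
  unfold tt
  rw [← Finset.sum_Ico_add']
  refine Finset.sum_congr rfl fun t ht => ?_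
  rw [Finset.mem_Ico] at ht
  rw [h t ht.1 ht.2.le, add_right_comm, h (t + 1) (by omega) ht.2]

theorem tt_add_of_periodic (V : CWalk n κ) {L : ℕ} (hL : Function.Periodic V.seq L) (i j : ℕ) :
    V.tt c (i + L) (j + L) = V.tt c i j :=
  V.tt_add_eq_tt V L fun t _ _ => hL t

theorem c_le_tt (V : CWalk n κ) (htri : ∀ u v w, c u w ≤ c u v + c v w) {i j : ℕ}
    (hij : i < j) : c (V.seq i) (V.seq j) ≤ V.tt c i j := by
  induction j, hij using Nat.le_induction with
  | base => simp [tt]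
  | succ j hij ih =>
    rw [V.tt_succ (by omega)]
    linarith [htri (V.seq i) (V.seq j) (V.seq (j + 1))]

theorem tt_add_le_tt_of_subseq (V : CWalk n κ) (V' : CWalk n κ')
    (htri : ∀ u v w, c u w ≤ c u v + c v w) (o : ℕ) {g : ℕ → ℕ} {s s' : ℕ} (hss' : s ≤ s')
    (hg : StrictMonoOn g (Set.Icc s s'))
    (h : ∀ r, s ≤ r → r ≤ s' → V'.seq (r + o) = V.seq (g r)) :
    V'.tt c (s + o) (s' + o) ≤ V.tt c (g s) (g s') := by
  induction s', hss' using Nat.le_induction with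
  | base => simp [tt]
  | succ s' hss' ih =>
    have hstep : g s' < g (s' + 1) := hg ⟨hss', by omega⟩ ⟨by omega, le_rfl⟩ (by omega)
    have hle : g s ≤ g s' := hg.monotoneOn ⟨le_rfl, by omega⟩ ⟨hss', by omega⟩ hss'
    rw [add_right_comm, V'.tt_succ (by omega), add_right_comm, h s' hss' (by omega),
      h (s' + 1) (by omega) le_rfl, ← V.tt_add_tt hle hstep.le]
    exact add_le_add (ih (hg.mono (Set.Icc_subset_Icc le_rfl (by omega)))
      fun r h₁ h₂ => h r h₁ (by omega)) (V.c_le_tt htri hstep)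

theorem exists_seq_eq_mem_Ioc (V : CWalk n κ) (u : Fin n) (i : ℕ) :
    ∃ p, i < p ∧ p ≤ i + 2 * κ ∧ V.seq p = u := by
  obtain ⟨p₀, hp₀, hu⟩ := V.covers u
  refine ⟨p₀ + (i / κ + 1) * κ, ?_, ?_, by rw [V.seq_periodic_mul, hu]⟩ <;>
  · have := Nat.div_add_mod i κ
    have := Nat.mod_lt i (by omega : 0 < κ)
    rw [add_one_mul, mul_comm]
    omega

theorem bddAbove_gaps (V : CWalk n κ) (hc : ∀ u v, u ≠ v → 0 ≤ c u v) (u : Fin n) :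
    BddAbove {T : ℝ | ∃ i j : ℕ, i < j ∧ V.seq i = u ∧ V.seq j = u ∧
      (∀ t, i < t → t < j → V.seq t ≠ u) ∧ T = V.tt c i j} := by
  refine ⟨V.tt c 0 (3 * κ), ?_⟩
  rintro _ ⟨i, j, hij, hi, hj, hne, rfl⟩
  obtain ⟨p, hip, hp, hpu⟩ := V.exists_seq_eq_mem_Ioc u i
  have hjp : j ≤ p := IsGap.right_le ⟨hij, hi, hj, hne⟩ hpu hip
  obtain ⟨r, q, hr, rfl⟩ : ∃ r q, r < κ ∧ i = r + q * κ :=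
    ⟨i % κ, i / κ, Nat.mod_lt i (by omega), (Nat.mod_add_div' i κ).symm⟩
  calc V.tt c (r + q * κ) j ≤ V.tt c (r + q * κ) ((r + 2 * κ) + q * κ) :=
        V.tt_mono hc le_rfl (by omega)
    _ = V.tt c r (r + 2 * κ) := V.tt_add_of_periodic (V.seq_periodic_mul q) _ _
    _ ≤ V.tt c 0 (3 * κ) := V.tt_mono hc (by omega) (by omega)

theorem RT_le_R_s4 (V : CWalk n κ) (u : Fin n) : V.RT c u ≤ V.R c := by
  obtain ⟨M, hM⟩ := (Set.finite_range (V.RT c)).bddAbove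
  refine le_csSup ⟨M, ?_⟩ ⟨u, rfl⟩
  rintro _ ⟨v, rfl⟩
  exact hM ⟨v, rfl⟩

theorem tt_le_R_of_forall_ne (V : CWalk n κ) (hc : ∀ u v, u ≠ v → 0 ≤ c u v) {u : Fin n}
    {i j : ℕ} (hi : V.seq i = u) (hne : ∀ t, i < t → t < j → V.seq t ≠ u) :
    V.tt c i j ≤ V.R c := by
  classical
  have hex : ∃ p, i < p ∧ V.seq p = u :=
    let ⟨p, hip, _, hp⟩ := V.exists_seq_eq_mem_Ioc u i
    ⟨p, hip, hp⟩
  obtain ⟨hip, hp⟩ := Nat.find_spec hex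
  have hgap : V.IsGap u i (Nat.find hex) :=
    ⟨hip, hi, hp, fun t hit htp ht => Nat.find_min hex htp ⟨hit, ht⟩⟩
  calc V.tt c i j ≤ V.tt c i (Nat.find hex) :=
        V.tt_mono hc le_rfl (not_lt.1 fun hpj => hne _ hip hpj hp)
    _ ≤ V.RT c u := le_csSup (V.bddAbove_gaps hc u) ⟨i, _, hip, hi, hp, hgap.ne, rfl⟩
    _ ≤ V.R c := V.RT_le_R_s4 u

theorem R_le (V : CWalk n κ) {x : ℝ} (hx : 0 ≤ x)
    (h : ∀ u i j, V.IsGap u i j → V.tt c i j ≤ x) : V.R c ≤ x := by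
  refine Real.sSup_le ?_ hx
  rintro _ ⟨u, rfl⟩
  refine Real.sSup_le ?_ hx
  rintro _ ⟨i, j, hij, hi, hj, hne, rfl⟩
  exact h u i j ⟨hij, hi, hj, hne⟩

theorem R_le_of_forall_gap_start_mem (V : CWalk n κ) {s : ℕ} (hs : s ≤ κ) {x : ℝ} (hx : 0 ≤ x)
    (h : ∀ u i j, s ≤ i → i < s + κ → V.IsGap u i j → V.tt c i j ≤ x) : V.R c ≤ x := by
  refine V.R_le hx fun u i j hgap => ?_
  obtain ⟨_, hκ, -⟩ := V.covers u
  obtain ⟨r, q, hr, rfl⟩ : ∃ r q, r < κ ∧ i = r + q * κ :=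
    ⟨i % κ, i / κ, Nat.mod_lt i (by omega), (Nat.mod_add_div' i κ).symm⟩
  obtain ⟨j, rfl⟩ : ∃ j', j = j' + q * κ := ⟨j - q * κ, by have := hgap.lt; omega⟩
  rw [V.tt_add_of_periodic (V.seq_periodic_mul q)]
  rw [isGap_add_iff (V.seq_periodic_mul q)] at hgap
  by_cases hsr : s ≤ r
  · exact h u r j hsr (by omega) hgap
  · rw [← V.tt_add_of_periodic V.seq_periodic]
    exact h u (r + κ) (j + κ) (by omega) (by omega) ((isGap_add_iff V.seq_periodic).2 hgap)

/-- `Wbar = S₁ ∘ W_b ∘ W'_b ∘ S₂`, where `W = S₁ ∘ W_b ∘ S₂`, `W_b` occupies the visits `a, …, b`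
of `W`, and `W'_b` is the shortcut of `W_b` keeping the visits `g 0 < ⋯ < g m`, among them the last
visit in `W_b` to every target. -/
structure IsShortcutInsertion (W : CWalk n k) (Wbar : CWalk n (k + m)) (a b : ℕ) (g : ℕ → ℕ) :
    Prop where
  b_le : b ≤ k
  g_zero : g 0 = a
  g_last : g m = b
  g_lt_succ : ∀ j < m, g j < g (j + 1)
  retains_last : ∀ u, ∃ j ≤ m, W.seq (g j) = u ∧ ∀ t, g j < t → t ≤ b → W.seq t ≠ u
  seq_prefix : ∀ i ≤ b, Wbar.seq i = W.seq i
  seq_shortcut : ∀ j ≤ m, Wbar.seq (j + b) = W.seq (g j)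
  seq_suffix : ∀ i, b ≤ i → i ≤ k → Wbar.seq (i + m) = W.seq i

namespace IsShortcutInsertion

variable {W : CWalk n k} {Wbar : CWalk n (k + m)} {a b : ℕ} {g : ℕ → ℕ}

theorem strictMonoOn (hS : IsShortcutInsertion W Wbar a b g) : StrictMonoOn g (Set.Iic m) :=
  strictMonoOn_Iic_of_lt_succ fun j hj => by simpa using hS.g_lt_succ j hj

theorem mem_Icc (hS : IsShortcutInsertion W Wbar a b g) {j : ℕ} (hj : j ≤ m) :
    g j ∈ Set.Icc a b := by
  rw [← hS.g_zero, ← hS.g_last]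
  exact ⟨hS.strictMonoOn.monotoneOn (Nat.zero_le m) hj (Nat.zero_le j),
    hS.strictMonoOn.monotoneOn hj (Set.mem_Iic.2 le_rfl) hj⟩

theorem seq_add_of_le (hS : IsShortcutInsertion W Wbar a b g) {i : ℕ} (hbi : b ≤ i)
    (hi : i ≤ b + k) : Wbar.seq (i + m) = W.seq i := by
  rcases le_or_gt i k with hik | hki
  · exact hS.seq_suffix i hbi hik
  · obtain ⟨i, rfl⟩ : ∃ i', i = i' + k := ⟨i - k, by omega⟩
    rw [add_assoc, Wbar.periodic, W.periodic, hS.seq_prefix i (by omega)]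

theorem tt_eq_of_le (hS : IsShortcutInsertion W Wbar a b g) {i j : ℕ} (hj : j ≤ b) :
    Wbar.tt c i j = W.tt c i j := by
  simpa using W.tt_add_eq_tt (c := c) Wbar 0 (i := i) fun t _ ht => hS.seq_prefix t (by omega)

theorem tt_add_eq (hS : IsShortcutInsertion W Wbar a b g) {i j : ℕ} (hi : b ≤ i)
    (hj : j ≤ b + k) : Wbar.tt c (i + m) (j + m) = W.tt c i j :=
  W.tt_add_eq_tt Wbar m fun _ h₁ h₂ => hS.seq_add_of_le (by omega) (by omega)

theorem tt_shortcut_le (hS : IsShortcutInsertion W Wbar a b g)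
    (htri : ∀ u v w, c u w ≤ c u v + c v w) {s s' : ℕ} (hss' : s ≤ s') (hs' : s' ≤ m) :
    Wbar.tt c (s + b) (s' + b) ≤ W.tt c (g s) (g s') :=
  W.tt_add_le_tt_of_subseq Wbar htri b hss' (hS.strictMonoOn.mono fun _ hr => hr.2.trans hs')
    fun r _ hr => hS.seq_shortcut r (hr.trans hs')

theorem seq_ne_of_last_in_shortcut (hS : IsShortcutInsertion W Wbar a b g) {u : Fin n} {s : ℕ}
    (hs : s ≤ m) (hne : ∀ t, s + b < t → t ≤ m + b → Wbar.seq t ≠ u) :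
    ∀ t, g s < t → t ≤ b → W.seq t ≠ u := by
  obtain ⟨j, hjm, hju, hlast⟩ := hS.retains_last u
  have hjs : j ≤ s := not_lt.1 fun hsj =>
    hne (j + b) (by omega) (by omega) (by rw [hS.seq_shortcut j hjm, hju])
  exact fun t ht htb => hlast t ((hS.strictMonoOn.monotoneOn hjm hs hjs).trans_lt ht) htb

theorem tt_le_R_of_isGap_shortcut_suffix (hS : IsShortcutInsertion W Wbar a b g)
    (hc : ∀ u v, u ≠ v → 0 ≤ c u v) (htri : ∀ u v w, c u w ≤ c u v + c v w) {u : Fin n}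
    {s j : ℕ} (hgap : Wbar.IsGap u (s + b) j) (hs : s < m) (hj : m + b < j) :
    Wbar.tt c (s + b) j ≤ W.R c := by
  obtain ⟨j', hj'm, hj'u, -⟩ := hS.retains_last u
  have hjK : j ≤ g j' + (k + m) :=
    hgap.right_le (by rw [Wbar.periodic, hS.seq_prefix _ (hS.mem_Icc hj'm).2, hj'u])
      (by have := hS.b_le; omega)
  obtain ⟨r, rfl⟩ : ∃ r, j = r + m := ⟨j - m, by omega⟩
  have hr : r ≤ b + k := by have := (hS.mem_Icc hj'm).2; omega
  have hlast := hS.seq_ne_of_last_in_shortcut hs.le fun t h₁ h₂ => hgap.ne t h₁ (by omega)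
  have hne : ∀ t, g s < t → t < r → W.seq t ≠ u := fun t h₁ h₂ => by
    rcases le_or_gt t b with htb | hbt
    · exact hlast t h₁ htb
    · rw [← hS.seq_add_of_le hbt.le (by omega)]
      exact hgap.ne _ (by omega) (by omega)
  calc Wbar.tt c (s + b) (r + m)
      = Wbar.tt c (s + b) (m + b) + Wbar.tt c (b + m) (r + m) := by
        rw [add_comm b m, Wbar.tt_add_tt (by omega) (by omega)]
    _ ≤ W.tt c (g s) (g m) + W.tt c b r :=
        add_le_add (hS.tt_shortcut_le htri hs.le le_rfl) (hS.tt_add_eq le_rfl hr).le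
    _ = W.tt c (g s) r := by rw [hS.g_last, W.tt_add_tt (hS.mem_Icc hs.le).2 (by omega)]
    _ ≤ W.R c :=
        W.tt_le_R_of_forall_ne hc (by rw [← hS.seq_shortcut s hs.le, hgap.left]) hne

theorem tt_le_R_of_isGap_suffix (hS : IsShortcutInsertion W Wbar a b g)
    (hc : ∀ u v, u ≠ v → 0 ≤ c u v) {u : Fin n} {i j : ℕ} (hgap : Wbar.IsGap u (i + m) (j + m))
    (hi : b ≤ i) (hj : j ≤ b + k) : Wbar.tt c (i + m) (j + m) ≤ W.R c := by
  have := hgap.lt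
  rw [hS.tt_add_eq hi hj]
  refine W.tt_le_R_of_forall_ne hc (u := u) ?_ fun t h₁ h₂ => ?_
  · rw [← hS.seq_add_of_le hi (by omega)]
    exact hgap.left
  · rw [← hS.seq_add_of_le (by omega) (by omega)]
    exact hgap.ne _ (by omega) (by omega)

/-- A gap from `S₂ ∘ S₁ ∘ W_b` into the next copy of `W'_b` runs from the last visit to `u` in
`W_b` to the first one in `W'_b`, so it is no longer than `W_b`. -/
theorem tt_le_of_isGap_wrap (hS : IsShortcutInsertion W Wbar a b g)
    (hc : ∀ u v, u ≠ v → 0 ≤ c u v) (htri : ∀ u v w, c u w ≤ c u v + c v w) {u : Fin n}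
    {i j : ℕ} (hgap : Wbar.IsGap u i j) (hi : i < b + (k + m)) (hj : b + (k + m) < j) :
    Wbar.tt c i j ≤ W.tt c a b := by
  obtain ⟨j', hj'm, hj'u, -⟩ := hS.retains_last u
  obtain ⟨hagj', hgj'b⟩ := hS.mem_Icc hj'm
  have hiK : g j' + (k + m) ≤ i :=
    hgap.le_left (by rw [Wbar.periodic, hS.seq_prefix _ hgj'b, hj'u]) (by omega)
  have hjK : j ≤ j' + b + (k + m) :=
    hgap.right_le (by rw [Wbar.periodic, hS.seq_shortcut j' hj'm, hj'u]) (by omega)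
  obtain ⟨i, rfl⟩ : ∃ i', i = i' + (k + m) := ⟨i - (k + m), by omega⟩
  obtain ⟨s, rfl⟩ : ∃ s, j = s + b + (k + m) := ⟨j - b - (k + m), by omega⟩
  rw [isGap_add_iff Wbar.seq_periodic] at hgap
  rw [Wbar.tt_add_of_periodic Wbar.seq_periodic]
  have hgs : g s ≤ i :=
    (hS.strictMonoOn.monotoneOn (show s ≤ m by omega) hj'm (by omega)).trans (by omega)
  calc Wbar.tt c i (s + b) = Wbar.tt c i b + Wbar.tt c (0 + b) (s + b) := by
        rw [zero_add, Wbar.tt_add_tt (by omega) (by omega)]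
    _ ≤ W.tt c i b + W.tt c (g 0) (g s) :=
        add_le_add (hS.tt_eq_of_le le_rfl).le (hS.tt_shortcut_le htri (Nat.zero_le s) (by omega))
    _ ≤ W.tt c i b + W.tt c a i := by
        rw [hS.g_zero]
        exact add_le_add_right (W.tt_mono hc le_rfl hgs) _
    _ = W.tt c a b := by rw [add_comm, W.tt_add_tt (by omega) (by omega)]

theorem tt_le_R_of_isGap (hS : IsShortcutInsertion W Wbar a b g)
    (hc : ∀ u v, u ≠ v → 0 ≤ c u v) (htri : ∀ u v w, c u w ≤ c u v + c v w)
    (hbind : W.tt c a b ≤ W.R c) {u : Fin n} {i j : ℕ} (hgap : Wbar.IsGap u i j) (hbi : b ≤ i)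
    (hi : i < b + (k + m)) : Wbar.tt c i j ≤ W.R c := by
  have := hgap.lt
  rcases lt_or_ge i (m + b) with him | hmi
  · obtain ⟨s, rfl⟩ : ∃ s, i = s + b := ⟨i - b, by omega⟩
    rcases le_or_gt j (m + b) with hjm | hmj
    · obtain ⟨s', rfl⟩ : ∃ s', j = s' + b := ⟨j - b, by omega⟩
      calc Wbar.tt c (s + b) (s' + b) ≤ W.tt c (g s) (g s') :=
            hS.tt_shortcut_le htri (by omega) (by omega)
        _ ≤ W.tt c a b :=
            W.tt_mono hc (hS.mem_Icc (by omega)).1 (hS.mem_Icc (by omega)).2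
        _ ≤ W.R c := hbind
    · exact hS.tt_le_R_of_isGap_shortcut_suffix hc htri hgap (by omega) hmj
  · rcases le_or_gt j (b + (k + m)) with hjK | hKj
    · obtain ⟨i, rfl⟩ : ∃ i', i = i' + m := ⟨i - m, by omega⟩
      obtain ⟨j, rfl⟩ : ∃ j', j = j' + m := ⟨j - m, by omega⟩
      exact hS.tt_le_R_of_isGap_suffix hc hgap (by omega) (by omega)
    · exact (hS.tt_le_of_isGap_wrap hc htri hgap hi hKj).trans hbind

end IsShortcutInsertion

end CWalk

theorem concat_binding_shortcut_general
    (n k m : ℕ)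
    (c : Fin n → Fin n → ℝ)
    (hc : ∀ u v : Fin n, u ≠ v → 0 < c u v)
    (htri : ∀ u v w : Fin n, c u w ≤ c u v + c v w)
    (W : CWalk n k)
    (d : Fin n) (a b : ℕ) (hab : a < b) (hbk : b ≤ k)
    (ha : W.seq a = d)
    (hmid : ∀ t, a < t → t < b → W.seq t ≠ d)
    (hbind : W.tt c a b = W.R c)
    -- `g` selects the visits of `W_b` kept in the shortcut walk `W'_b`
    (g : ℕ → ℕ) (hg0 : g 0 = a) (hgm : g m = b)
    (hgmono : ∀ j < m, g j < g (j + 1))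
    -- the last visit in `W_b` to each target is retained in `W'_b`
    (hlast : ∀ u : Fin n, ∃ j ≤ m, a ≤ g j ∧ g j ≤ b ∧ W.seq (g j) = u ∧
      ∀ t', g j < t' → t' ≤ b → W.seq t' ≠ u)
    -- `W̄ = S₁ ∘ W_b ∘ W'_b ∘ S₂`
    (Wbar : CWalk n (k + m))
    (h1 : ∀ i ≤ b, Wbar.seq i = W.seq i)
    (h2 : ∀ j ≤ m, Wbar.seq (b + j) = W.seq (g j))
    (h3 : ∀ i, b + m ≤ i → i ≤ k + m → Wbar.seq i = W.seq (i - m)) :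
    Wbar.R c = W.R c := by
  have hc₀ : ∀ u v : Fin n, u ≠ v → 0 ≤ c u v := fun u v h => (hc u v h).le
  have hS : W.IsShortcutInsertion Wbar a b g :=
    { b_le := hbk, g_zero := hg0, g_last := hgm, g_lt_succ := hgmono
      retains_last := fun u => by
        obtain ⟨j, hj, -, -, hju, hne⟩ := hlast u
        exact ⟨j, hj, hju, hne⟩
      seq_prefix := h1
      seq_shortcut := fun j hj => by rw [add_comm j b]; exact h2 j hj
      seq_suffix := fun i hbi hik => by simpa using h3 (i + m) (by omega) (by omega) }
  apply le_antisymm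
  · refine Wbar.R_le_of_forall_gap_start_mem (s := b) (by omega) ?_ fun u i j hbi hi hgap => ?_
    · rw [← hbind]
      exact W.tt_nonneg hc₀ a b
    · exact hS.tt_le_R_of_isGap hc₀ htri hbind.le hgap hbi hi
  · calc W.R c = Wbar.tt c a b := by rw [← hbind, hS.tt_eq_of_le le_rfl]
      _ ≤ Wbar.R c := Wbar.tt_le_R_of_forall_ne hc₀ (by rw [h1 a hab.le, ha])
          fun t h₁ h₂ => by rw [h1 t h₂.le]; exact hmid t h₁ h₂

/-- inserting, right after a binding subwalk `W_b` (occupying the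
visits `a,…,b` of `W`, with terminus `d`), a shortcut `W'_b` of `W_b`
(selected by the increasing index map `g`, retaining the last visit to each
target) yields a walk `W̄ = S₁ ∘ W_b ∘ W'_b ∘ S₂` with `R(W̄) = R(W)`. -/
theorem concat_binding_shortcut
    (n k m : ℕ) (hn : 2 ≤ n) (hk : n ≤ k) (hm : 1 ≤ m)
    (c : Fin n → Fin n → ℝ)
    (hc : ∀ u v : Fin n, u ≠ v → 0 < c u v)
    (htri : ∀ u v w : Fin n, c u w ≤ c u v + c v w)
    (W : CWalk n k)
    (d : Fin n) (a b : ℕ) (hab : a < b) (hbk : b ≤ k)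
    (ha : W.seq a = d) (hb : W.seq b = d)
    (hmid : ∀ t, a < t → t < b → W.seq t ≠ d)
    (hbind : W.tt c a b = W.R c)
    -- `g` selects the visits of `W_b` kept in the shortcut walk `W'_b`
    (g : ℕ → ℕ) (hg0 : g 0 = a) (hgm : g m = b)
    (hgmono : ∀ j < m, g j < g (j + 1))
    (hgstep : ∀ j < m, W.seq (g j) ≠ W.seq (g (j + 1)))
    -- the last visit in `W_b` to each target is retained in `W'_b`
    (hlast : ∀ u : Fin n, ∃ j ≤ m, a ≤ g j ∧ g j ≤ b ∧ W.seq (g j) = u ∧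
      ∀ t', g j < t' → t' ≤ b → W.seq t' ≠ u)
    -- `W̄ = S₁ ∘ W_b ∘ W'_b ∘ S₂`
    (Wbar : CWalk n (k + m))
    (h1 : ∀ i ≤ b, Wbar.seq i = W.seq i)
    (h2 : ∀ j ≤ m, Wbar.seq (b + j) = W.seq (g j))
    (h3 : ∀ i, b + m ≤ i → i ≤ k + m → Wbar.seq i = W.seq (i - m)) :
    Wbar.R c = W.R c :=
  concat_binding_shortcut_general n k m c hc htri W d a b hab hbk ha hmid hbind g hg0 hgm hgmono
    hlast Wbar h1 h2 h3
end

section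
/- Let W*(k) be an optimal closed walk with n+1 ≤ k ≤ 2n−1 visits and W(k−1) a shortcut walk of W*(k) obtained by removing one revisit. The closed walk W̄ formed by concatenating q ≥ 1 copies of W*(k) followed by p ≥ 0 copies of W(k−1) satisfies R(W̄) = R(W*(k)). -/
/-!
As `k < 2n`, some target `d` is visited exactly once per period of `W*(k)`, so its revisit
time is the duration `D` of a period, and `R(W*(k)) = D`.

`W̄` is `W*(k)` read along a strictly increasing reindexing that skips only visits at positions
`≡ s (mod k)`. By the triangle inequality every stretch of `W̄` takes at most as long as the
corresponding stretch of `W*(k)`; as every target has a visit at a position `≢ s`, which is never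
skipped, consecutive visits of `W̄` to a target are at most `k` positions of `W*(k)` apart, so
`R(W̄) ≤ D`. Conversely, some full period of `W*(k)` between two visits to `d` survives
unshortened in `W̄`, so `R(W̄) = D`.
-/

namespace CWalk

variable {n k m : ℕ}

theorem period_pos (W : CWalk n k) : 0 < k := by
  obtain ⟨i, hi, -⟩ := W.covers (W.seq 0)
  omega

theorem seq_mod (W : CWalk n k) (i : ℕ) : W.seq (i % k) = W.seq i :=
  Function.Periodic.map_mod_nat W.periodic i

theorem seq_add_of_dvd (W : CWalk n k) {a : ℕ} (ha : k ∣ a) (i : ℕ) :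
    W.seq (i + a) = W.seq i := by
  obtain ⟨m, rfl⟩ := ha
  rw [mul_comm]
  exact Function.Periodic.nat_mul W.periodic m i

theorem exists_visited_once (W : CWalk n k) (hk : k < 2 * n) :
    ∃ x < k, ∀ t, W.seq t = W.seq x → t ≡ x [MOD k] := by
  classical
  obtain ⟨d, -, hd⟩ := Finset.exists_card_fiber_lt_of_card_lt_mul (s := Finset.range k)
    (t := Finset.univ) (f := W.seq) (n := 2) (by simpa [mul_comm] using hk)
  obtain ⟨x, hx, rfl⟩ := W.covers d
  refine ⟨x, hx, fun t ht => ?_⟩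
  have hmem : ∀ y < k, W.seq y = W.seq x → y ∈ {y ∈ Finset.range k | W.seq y = W.seq x} :=
    fun y hy h => Finset.mem_filter.2 ⟨Finset.mem_range.2 hy, h⟩
  have := Finset.card_le_one.1 (by omega) _ (hmem _ (Nat.mod_lt t (W.period_pos))
    ((W.seq_mod t).trans ht)) _ (hmem x hx rfl)
  rw [Nat.ModEq, this, Nat.mod_eq_of_lt hx]

def IsReturn (W : CWalk n k) (d : Fin n) (i j : ℕ) : Prop :=
  i < j ∧ W.seq i = d ∧ W.seq j = d ∧ ∀ t, i < t → t < j → W.seq t ≠ d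

theorem exists_isReturn (W : CWalk n k) (d : Fin n) : ∃ i j, W.IsReturn d i j := by
  classical
  obtain ⟨i, hik, hi⟩ := W.covers d
  have hnext : ∃ j, i < j ∧ W.seq j = d := ⟨i + k, by omega, by rw [W.periodic, hi]⟩
  exact ⟨i, Nat.find hnext, (Nat.find_spec hnext).1, hi, (Nat.find_spec hnext).2,
    fun t hit htj htd => Nat.find_min hnext htj ⟨hit, htd⟩⟩

section TravelTime

variable (c : Fin n → Fin n → ℝ)

theorem R_eq_of_forall_tt_le (W : CWalk n k) {B : ℝ}
    (hle : ∀ d i j, W.IsReturn d i j → W.tt c i j ≤ B) {d : Fin n} {i j : ℕ}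
    (hd : W.IsReturn d i j) (hB : W.tt c i j = B) : W.R c = B := by
  have hRT : ∀ d', W.RT c d' ≤ B := fun d' => by
    obtain ⟨i', j', h1, h2, h3, h4⟩ := W.exists_isReturn d'
    refine csSup_le ⟨_, i', j', h1, h2, h3, h4, rfl⟩ ?_
    rintro T ⟨i, j, h1, h2, h3, h4, rfl⟩
    exact hle d' i j ⟨h1, h2, h3, h4⟩
  obtain ⟨h1, h2, h3, h4⟩ := hd
  have hRTd : W.RT c d = B := by
    refine le_antisymm (hRT d) (le_csSup ⟨B, ?_⟩ ⟨i, j, h1, h2, h3, h4, hB.symm⟩)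
    rintro T ⟨i, j, h1, h2, h3, h4, rfl⟩
    exact hle d i j ⟨h1, h2, h3, h4⟩
  exact IsGreatest.csSup_eq ⟨⟨d, hRTd.symm⟩, by rintro T ⟨d', rfl⟩; exact hRT d'⟩

theorem tt_add_s7 (W : CWalk n k) {a b d : ℕ} (hab : a ≤ b) (hbd : b ≤ d) :
    W.tt c a b + W.tt c b d = W.tt c a d :=
  Finset.sum_Ico_consecutive _ hab hbd

theorem tt_succ_s7 (W : CWalk n k) {a b : ℕ} (hab : a ≤ b) :
    W.tt c a (b + 1) = W.tt c a b + c (W.seq b) (W.seq (b + 1)) :=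
  Finset.sum_Ico_succ_top hab _

theorem tt_mono_s7 (hc : ∀ u v, u ≠ v → 0 ≤ c u v) (W : CWalk n k) {a b d : ℕ} (hbd : b ≤ d) :
    W.tt c a b ≤ W.tt c a d :=
  Finset.sum_le_sum_of_subset_of_nonneg (Finset.Ico_subset_Ico le_rfl hbd)
    fun t _ _ => hc _ _ (W.step t)

theorem tt_eq_of_seq_eq (V : CWalk n m) (W : CWalk n k) {a x l : ℕ}
    (h : ∀ u ≤ l, V.seq (a + u) = W.seq (x + u)) : V.tt c a (a + l) = W.tt c x (x + l) := by
  unfold tt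
  rw [Finset.sum_Ico_eq_sum_range, Finset.sum_Ico_eq_sum_range, Nat.add_sub_cancel_left,
    Nat.add_sub_cancel_left]
  refine Finset.sum_congr rfl fun u hu => ?_
  have hu := Finset.mem_range.1 hu
  have hsucc := h (u + 1) hu
  rw [← add_assoc, ← add_assoc] at hsucc
  rw [h u hu.le, hsucc]

theorem tt_add_period_s7 (W : CWalk n k) (a : ℕ) : W.tt c a (a + k) = W.duration c := by
  have hshift : W.tt c k (k + a) = W.tt c 0 (0 + a) :=
    W.tt_eq_of_seq_eq c W fun u _ => by rw [add_comm k u, W.periodic, zero_add]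
  have h1 := W.tt_add_s7 c (Nat.zero_le a) (Nat.le_add_right a k)
  have h2 := W.tt_add_s7 c (Nat.zero_le k) (Nat.le_add_right k a)
  rw [zero_add] at hshift
  rw [add_comm k a] at h2 hshift
  unfold duration
  linarith

theorem le_tt (htri : ∀ u v w, c u w ≤ c u v + c v w) (W : CWalk n k) {a b : ℕ} (hab : a < b) :
    c (W.seq a) (W.seq b) ≤ W.tt c a b := by
  induction b, hab using Nat.le_induction with
  | base => simp [tt]
  | succ b hab ih =>
    rw [W.tt_succ_s7 c (Nat.le_of_succ_le hab)]
    linarith [htri (W.seq a) (W.seq b) (W.seq (b + 1))]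

theorem tt_le_tt_of_strictMono (htri : ∀ u v w, c u w ≤ c u v + c v w) (V : CWalk n m)
    (W : CWalk n k) {F : ℕ → ℕ} (hF : StrictMono F) (hVW : ∀ i, V.seq i = W.seq (F i))
    {i j : ℕ} (hij : i ≤ j) : V.tt c i j ≤ W.tt c (F i) (F j) := by
  induction j, hij using Nat.le_induction with
  | base => simp [tt]
  | succ j hij ih =>
    rw [V.tt_succ_s7 c hij, ← W.tt_add_s7 c (hF.monotone hij) (hF.monotone j.le_succ), hVW, hVW]
    linarith [W.le_tt c htri (hF (Nat.lt_succ_self j))]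

end TravelTime

end CWalk

theorem Nat.exists_modEq_mem_Ioc (a : ℕ) {k : ℕ} (hk : 0 < k) (r : ℕ) :
    ∃ x ∈ Set.Ioc a (a + k), x ≡ r [MOD k] := by
  have h := Nat.div_add_mod (a + k - r % k) k
  have hlt := Nat.mod_lt (a + k - r % k) hk
  have hr := Nat.mod_lt r hk
  refine ⟨a + k - (a + k - r % k) % k, ⟨by omega, by omega⟩, ?_⟩
  rw [show a + k - (a + k - r % k) % k = r % k + k * ((a + k - r % k) / k) by omega]
  rw [Nat.ModEq, Nat.add_mul_mod_self_left, Nat.mod_mod]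

theorem Nat.eq_mod_or_eq_mod_add {v k : ℕ} (hv : v < 2 * k) : v = v % k ∨ v = v % k + k := by
  have hdiv := Nat.div_add_mod v k
  have : v / k < 2 := Nat.div_lt_of_lt_mul (by linarith)
  interval_cases h : v / k <;> omega

namespace CWalk

variable {n k m : ℕ} (c : Fin n → Fin n → ℝ)

theorem tt_le_duration_of_isReturn (hc : ∀ u v, u ≠ v → 0 ≤ c u v)
    (htri : ∀ u v w, c u w ≤ c u v + c v w) (V : CWalk n m) (W : CWalk n k) {F : ℕ → ℕ}
    (hF : StrictMono F) (hVW : ∀ i, V.seq i = W.seq (F i))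
    (hkept : ∀ d, ∃ r, W.seq r = d ∧ ∀ x, x ≡ r [MOD k] → x ∈ Set.range F)
    {d : Fin n} {i j : ℕ} (h : V.IsReturn d i j) : V.tt c i j ≤ W.duration c := by
  obtain ⟨hij, -, -, hnot⟩ := h
  have hFj : F j ≤ F i + k := by
    by_contra! hlt
    obtain ⟨r, hr, hrange⟩ := hkept d
    obtain ⟨x, ⟨hx1, hx2⟩, hxr⟩ := Nat.exists_modEq_mem_Ioc (F i) W.period_pos r
    obtain ⟨t, rfl⟩ := hrange x hxr
    refine hnot t (hF.lt_iff_lt.1 hx1) (hF.lt_iff_lt.1 (by omega)) ?_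
    rw [hVW, ← W.seq_mod, hxr, W.seq_mod, hr]
  calc V.tt c i j ≤ W.tt c (F i) (F j) := tt_le_tt_of_strictMono c htri V W hF hVW hij.le
    _ ≤ W.tt c (F i) (F i + k) := W.tt_mono_s7 c hc hFj
    _ = W.duration c := W.tt_add_period_s7 c _

theorem isReturn_of_window (V : CWalk n m) (W : CWalk n k) {x a : ℕ}
    (honce : ∀ t, W.seq t = W.seq x → t ≡ x [MOD k])
    (hwin : ∀ u ≤ k, V.seq (a + u) = W.seq (x + u)) : V.IsReturn (W.seq x) a (a + k) := by
  have hk := W.period_pos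
  refine ⟨by omega, by simpa using hwin 0 (Nat.zero_le k), by rw [hwin k le_rfl, W.periodic],
    fun t hat htk ht => ?_⟩
  obtain ⟨u, rfl⟩ := Nat.exists_eq_add_of_lt hat
  rw [add_assoc, hwin (u + 1) (by omega)] at ht
  have := Nat.ModEq.add_left_cancel' x (a := u + 1) (b := 0) (by rw [add_zero]; exact honce _ ht)
  rw [Nat.ModEq, Nat.zero_mod, Nat.mod_eq_of_lt (by omega)] at this
  omega

theorem R_eq_duration (hc : ∀ u v, u ≠ v → 0 ≤ c u v) (htri : ∀ u v w, c u w ≤ c u v + c v w)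
    (V : CWalk n m) (W : CWalk n k) {F : ℕ → ℕ} (hF : StrictMono F)
    (hVW : ∀ i, V.seq i = W.seq (F i))
    (hkept : ∀ d, ∃ r, W.seq r = d ∧ ∀ x, x ≡ r [MOD k] → x ∈ Set.range F)
    {x a : ℕ} (honce : ∀ t, W.seq t = W.seq x → t ≡ x [MOD k])
    (hwin : ∀ u ≤ k, V.seq (a + u) = W.seq (x + u)) : V.R c = W.duration c :=
  V.R_eq_of_forall_tt_le c (fun _ _ _ h => tt_le_duration_of_isReturn c hc htri V W hF hVW hkept h)
    (isReturn_of_window V W honce hwin) (by rw [tt_eq_of_seq_eq c V W hwin, tt_add_period_s7])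

end CWalk

def StepOrSkip (k s x y : ℕ) : Prop :=
  y = x + 1 ∨ (y = x + 2 ∧ (x + 1) % k = s)

namespace StepOrSkip

variable {k s x y : ℕ}

theorem add_left (h : StepOrSkip k s x y) {a : ℕ} (ha : k ∣ a) :
    StepOrSkip k s (a + x) (a + y) := by
  obtain ⟨m, rfl⟩ := ha
  rcases h with h | ⟨h, hs⟩
  · exact Or.inl (by omega)
  · exact Or.inr ⟨by omega, by rw [add_assoc, Nat.mul_add_mod, hs]⟩

theorem strictMono {F : ℕ → ℕ} (h : ∀ i, StepOrSkip k s (F i) (F (i + 1))) : StrictMono F :=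
  strictMono_nat_of_lt_succ fun i => by rcases h i with h | h <;> omega

theorem mem_range {F : ℕ → ℕ} (h : ∀ i, StepOrSkip k s (F i) (F (i + 1))) {x : ℕ}
    (hx : F 0 ≤ x) (hxs : x % k ≠ s) : x ∈ Set.range F := by
  suffices ∀ x, F 0 ≤ x → ∃ i, F i = x ∨ (F i + 1 = x ∧ F (i + 1) = x + 1 ∧ x % k = s) by
    obtain ⟨i, hi | hi⟩ := this x hx
    exacts [⟨i, hi⟩, absurd hi.2.2 hxs]
  intro x hx
  induction x, hx using Nat.le_induction with
  | base => exact ⟨0, Or.inl rfl⟩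
  | succ x _ ih =>
    obtain ⟨i, rfl | ⟨rfl, hi, -⟩⟩ := ih
    · rcases h i with hi | ⟨hi, hs⟩
      · exact ⟨i + 1, Or.inl hi⟩
      · exact ⟨i, Or.inr ⟨rfl, by omega, hs⟩⟩
    · exact ⟨i + 1, Or.inl hi⟩

end StepOrSkip

theorem StrictMono.apply_add_eq_of_forall_mem_range {F : ℕ → ℕ} (hF : StrictMono F)
    {a x l : ℕ} (ha : F a = x) (hmem : ∀ u ≤ l, x + u ∈ Set.range F) :
    ∀ u ≤ l, F (a + u) = x + u := by
  intro u hu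
  induction u with
  | zero => simpa using ha
  | succ u ih =>
    have hu' := ih (by omega)
    obtain ⟨t, ht⟩ := hmem (u + 1) hu
    have hlt : a + u < t := hF.lt_iff_lt.1 (by omega)
    have hle : F (a + (u + 1)) ≤ F t := hF.monotone (by omega)
    have hgt : F (a + u) < F (a + (u + 1)) := hF (by omega)
    omega

def periodicExtend (K P : ℕ) (f : ℕ → ℕ) (i : ℕ) : ℕ :=
  i / K * P + f (i % K)

section PeriodicExtend

variable {K P : ℕ} {f : ℕ → ℕ}

theorem periodicExtend_mul_add (a : ℕ) {b : ℕ} (hb : b < K) :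
    periodicExtend K P f (a * K + b) = a * P + f b := by
  have hK : 0 < K := by omega
  rw [periodicExtend, mul_comm a K, Nat.mul_add_div hK, Nat.mul_add_mod, Nat.div_eq_of_lt hb,
    Nat.mod_eq_of_lt hb, add_zero]

theorem periodicExtend_of_lt {b : ℕ} (hb : b < K) : periodicExtend K P f b = f b := by
  simpa using periodicExtend_mul_add (P := P) (f := f) 0 hb

theorem exists_eq_mul_add (hK : 0 < K) (i : ℕ) : ∃ a b, b < K ∧ i = a * K + b :=
  ⟨i / K, i % K, Nat.mod_lt i hK, (Nat.div_add_mod' i K).symm⟩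

theorem stepOrSkip_periodicExtend {k s : ℕ} (hK : 0 < K) (hP : k ∣ P)
    (hf : ∀ b, b + 1 < K → StepOrSkip k s (f b) (f (b + 1)))
    (hwrap : StepOrSkip k s (f (K - 1)) (P + f 0)) (i : ℕ) :
    StepOrSkip k s (periodicExtend K P f i) (periodicExtend K P f (i + 1)) := by
  obtain ⟨a, b, hb, rfl⟩ := exists_eq_mul_add hK i
  rw [periodicExtend_mul_add a hb]
  by_cases hb' : b + 1 < K
  · rw [add_assoc, periodicExtend_mul_add a hb']
    exact (hf b hb').add_left (Dvd.dvd.mul_left hP a)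
  · have hbK : b = K - 1 := by omega
    rw [show a * K + b + 1 = (a + 1) * K + 0 by rw [add_one_mul]; omega,
      periodicExtend_mul_add _ hK, add_one_mul, add_assoc, hbK]
    exact hwrap.add_left (Dvd.dvd.mul_left hP a)

theorem CWalk.seq_periodicExtend {n k : ℕ} (V : CWalk n K) (W : CWalk n k) (hP : k ∣ P)
    (h : ∀ b < K, V.seq b = W.seq (f b)) (i : ℕ) :
    V.seq i = W.seq (periodicExtend K P f i) := by
  obtain ⟨a, b, hb, rfl⟩ := exists_eq_mul_add V.period_pos i
  rw [periodicExtend_mul_add a hb, add_comm, V.seq_add_of_dvd (Dvd.intro_left a rfl), add_comm,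
    W.seq_add_of_dvd (Dvd.dvd.mul_left hP a), h b hb]

end PeriodicExtend

/-- `Fin.succAbove s j`, valued in `ℕ`. -/
def shortcutIndex (s j : ℕ) : ℕ :=
  if j < s then j else j + 1

section Concat

variable {k s : ℕ}

theorem stepOrSkip_shortcutIndex (hs : s < k) (j : ℕ) :
    StepOrSkip k s (shortcutIndex s j) (shortcutIndex s (j + 1)) := by
  unfold shortcutIndex StepOrSkip
  by_cases hj : j + 1 = s
  · subst hj
    rw [if_pos (Nat.lt_succ_self j), if_neg (lt_irrefl _), Nat.mod_eq_of_lt hs]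
    exact Or.inr ⟨rfl, rfl⟩
  · left
    split_ifs <;> omega

theorem stepOrSkip_block_boundary (hk : 2 ≤ k) (hs : s < k) {x y : ℕ}
    (hx : x = k - 1 ∨ x = shortcutIndex s (k - 2)) (hy : y = k ∨ y = k + shortcutIndex s 0) :
    StepOrSkip k s x y := by
  unfold shortcutIndex at hx hy
  have hxk : x + 1 ≤ k := by split_ifs at hx <;> omega
  have hmod : (x + 1) % k = if x + 1 = k then 0 else x + 1 := by
    split_ifs with h
    · rw [h, Nat.mod_self]
    · exact Nat.mod_eq_of_lt (by omega)
  unfold StepOrSkip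
  rw [hmod]
  split_ifs at hx hy ⊢ <;> omega

def concatIndex (q k s b : ℕ) : ℕ :=
  if b < q * k then b else q * k + periodicExtend (k - 1) k (shortcutIndex s) (b - q * k)

/-- Visit `i` of `q` copies of a walk `W` of period `k` followed by `p` copies of `W` with visit
`s` removed is visit `concatPos q k p s i` of `W` (`CWalk.seq_concat`). -/
def concatPos (q k p s : ℕ) : ℕ → ℕ :=
  periodicExtend (q * k + p * (k - 1)) ((q + p) * k) (concatIndex q k s)

variable {q p : ℕ}

theorem stepOrSkip_shortcutBlocks (hk : 2 ≤ k) (hs : s < k) (j : ℕ) :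
    StepOrSkip k s (periodicExtend (k - 1) k (shortcutIndex s) j)
      (periodicExtend (k - 1) k (shortcutIndex s) (j + 1)) :=
  stepOrSkip_periodicExtend (by omega) dvd_rfl (fun b _ => stepOrSkip_shortcutIndex hs b)
    (stepOrSkip_block_boundary hk hs (Or.inr (by rw [Nat.sub_sub])) (Or.inr rfl)) j

theorem stepOrSkip_concatIndex (hk : 2 ≤ k) (hs : s < k) (hq : 1 ≤ q) (b : ℕ) :
    StepOrSkip k s (concatIndex q k s b) (concatIndex q k s (b + 1)) := by
  obtain ⟨q, rfl⟩ : ∃ r, q = r + 1 := ⟨q - 1, by omega⟩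
  have hqk : (q + 1) * k = q * k + k := add_one_mul q k
  unfold concatIndex
  split_ifs with h1 h2 h2
  · exact Or.inl rfl
  · rw [show b + 1 - (q + 1) * k = 0 by omega, periodicExtend_of_lt (by omega),
      show b = q * k + (k - 1) by omega, hqk, add_assoc]
    exact (stepOrSkip_block_boundary hk hs (Or.inl rfl) (Or.inr rfl)).add_left
      (dvd_mul_left k q)
  · omega
  · rw [show b + 1 - (q + 1) * k = b - (q + 1) * k + 1 by omega]
    exact (stepOrSkip_shortcutBlocks hk hs _).add_left (dvd_mul_left k _)

theorem stepOrSkip_concatIndex_wrap (hk : 2 ≤ k) (hs : s < k) (hq : 1 ≤ q) :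
    StepOrSkip k s (concatIndex q k s (q * k + p * (k - 1) - 1))
      ((q + p) * k + concatIndex q k s 0) := by
  have hqk : 0 < q * k := Nat.mul_pos (by omega) (by omega)
  have h0 : concatIndex q k s 0 = 0 := if_pos hqk
  rw [h0, add_zero]
  rcases Nat.eq_zero_or_pos p with rfl | hp
  · rw [concatIndex, if_pos (by omega)]
    exact Or.inl (by simp; omega)
  · obtain ⟨p, rfl⟩ : ∃ r, p = r + 1 := ⟨p - 1, by omega⟩
    have hpk : (p + 1) * (k - 1) = p * (k - 1) + (k - 1) := add_one_mul p (k - 1)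
    rw [concatIndex, if_neg (by omega), show q * k + (p + 1) * (k - 1) - 1 - q * k
      = p * (k - 1) + (k - 2) by omega, periodicExtend_mul_add p (by omega),
      show (q + (p + 1)) * k = q * k + p * k + k by ring, ← add_assoc]
    exact (stepOrSkip_block_boundary hk hs (Or.inr rfl) (Or.inl rfl)).add_left
      (dvd_add (dvd_mul_left k q) (dvd_mul_left k p))

theorem stepOrSkip_concatPos (hk : 2 ≤ k) (hs : s < k) (hq : 1 ≤ q) (i : ℕ) :
    StepOrSkip k s (concatPos q k p s i) (concatPos q k p s (i + 1)) :=
  stepOrSkip_periodicExtend (Nat.lt_of_lt_of_le (Nat.mul_pos hq (by omega)) le_self_add)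
    (dvd_mul_left k _) (fun b _ => stepOrSkip_concatIndex hk hs hq b)
    (stepOrSkip_concatIndex_wrap hk hs hq) i

theorem CWalk.seq_concat {n : ℕ} (Wk : CWalk n k) (Wk1 : CWalk n (k - 1))
    (Wbar : CWalk n (q * k + p * (k - 1)))
    (hsc1 : ∀ j < s, Wk1.seq j = Wk.seq j)
    (hsc2 : ∀ j, s ≤ j → j < k - 1 → Wk1.seq j = Wk.seq (j + 1))
    (hb1 : ∀ i < q * k, Wbar.seq i = Wk.seq (i % k))
    (hb2 : ∀ j < p * (k - 1), Wbar.seq (q * k + j) = Wk1.seq (j % (k - 1))) (i : ℕ) :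
    Wbar.seq i = Wk.seq (concatPos q k p s i) := by
  have hWk1 : ∀ j, Wk1.seq j = Wk.seq (periodicExtend (k - 1) k (shortcutIndex s) j) :=
    Wk1.seq_periodicExtend Wk dvd_rfl fun b hb => by
      unfold shortcutIndex
      split_ifs with h
      exacts [hsc1 b h, hsc2 b (not_lt.1 h) hb]
  refine Wbar.seq_periodicExtend Wk (dvd_mul_left k _) (fun b hb => ?_) i
  unfold concatIndex
  split_ifs with h
  · rw [hb1 b h, Wk.seq_mod]
  · obtain ⟨j, rfl⟩ := Nat.exists_eq_add_of_le (not_lt.1 h)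
    rw [hb2 j (by omega), Wk1.seq_mod, hWk1, Nat.add_sub_cancel_left, add_comm,
      Wk.seq_add_of_dvd (dvd_mul_left k q)]

theorem concatPos_of_lt {b : ℕ} (hb : b < q * k) : concatPos q k p s b = b := by
  rw [concatPos, periodicExtend_of_lt (by omega), concatIndex, if_pos hb]

theorem mem_range_concatPos (hk : 2 ≤ k) (hs : s < k) (hq : 1 ≤ q) {y : ℕ} (hy : y % k ≠ s) :
    y ∈ Set.range (concatPos q k p s) :=
  StepOrSkip.mem_range (stepOrSkip_concatPos hk hs hq)
    (by rw [concatPos_of_lt (Nat.mul_pos hq (by omega))]; exact Nat.zero_le y) hy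

theorem exists_concatPos_window (hk : 2 ≤ k) (hs : s < k) (hq : 1 ≤ q) {i0 : ℕ} (hi0 : i0 < k)
    (hi0s : i0 ≠ s) : ∃ x a, x ≡ i0 [MOD k] ∧ ∀ u ≤ k, concatPos q k p s (a + u) = x + u := by
  have hqk : k ≤ q * k := Nat.le_mul_of_pos_left k hq
  -- a window of length `k` contains one position `≡ s`; choose it outside the shortcut copies
  obtain ⟨x, hx, hxs⟩ : ∃ x, x ≡ i0 [MOD k] ∧
      ∀ u ≤ k, (x + u) % k = s → x + u ∈ Set.range (concatPos q k p s) := by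
    rcases lt_or_gt_of_ne hi0s with h | h
    · refine ⟨i0, rfl, fun u hu hus => ⟨s, ?_⟩⟩
      rcases Nat.eq_mod_or_eq_mod_add (v := i0 + u) (k := k) (by omega) with hv | hv <;>
        rw [hus] at hv
      · rw [concatPos_of_lt (by omega), hv]
      · omega
    · have hqp : (q + p - 1) * k + k = (q + p) * k := by
        rw [← add_one_mul, Nat.sub_add_cancel (by omega)]
      refine ⟨(q + p - 1) * k + i0, by simp [Nat.ModEq], fun u hu hus =>
        ⟨1 * (q * k + p * (k - 1)) + s, ?_⟩⟩
      rw [add_assoc, add_comm, Nat.add_mul_mod_self_right] at hus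
      rw [concatPos, periodicExtend_mul_add 1 (by omega), concatIndex, if_pos (by omega), one_mul]
      rcases Nat.eq_mod_or_eq_mod_add (v := i0 + u) (k := k) (by omega) with hv | hv <;>
        rw [hus] at hv <;> omega
  obtain ⟨a, ha⟩ := mem_range_concatPos hk hs hq (by rwa [hx, Nat.mod_eq_of_lt hi0])
  refine ⟨x, a, hx, StrictMono.apply_add_eq_of_forall_mem_range
    (StepOrSkip.strictMono (stepOrSkip_concatPos hk hs hq)) ha fun u hu => ?_⟩
  by_cases h : (x + u) % k = s
  exacts [hxs u hu h, mem_range_concatPos hk hs hq h]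

end Concat

theorem concat_optimal_with_shortcut_general
    (n k q p : ℕ) (hk2 : k ≤ 2 * n - 1) (hq : 1 ≤ q)
    (c : Fin n → Fin n → ℝ)
    (hc : ∀ u v : Fin n, u ≠ v → 0 < c u v)
    (htri : ∀ u v w : Fin n, c u w ≤ c u v + c v w)
    (Wk : CWalk n k)
    -- `W(k-1)` is obtained by shortcutting the revisit at position `s`
    (s : ℕ) (hs : s < k)
    (hmulti : ∃ t < k, t ≠ s ∧ Wk.seq t = Wk.seq s)
    (Wk1 : CWalk n (k - 1))
    (hsc1 : ∀ j < s, Wk1.seq j = Wk.seq j)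
    (hsc2 : ∀ j, s ≤ j → j < k - 1 → Wk1.seq j = Wk.seq (j + 1))
    -- `W̄` is `q` copies of `W*(k)` followed by `p` copies of `W(k-1)`
    (Wbar : CWalk n (q * k + p * (k - 1)))
    (hb1 : ∀ i < q * k, Wbar.seq i = Wk.seq (i % k))
    (hb2 : ∀ j < p * (k - 1), Wbar.seq (q * k + j) = Wk1.seq (j % (k - 1))) :
    Wbar.R c = Wk.R c := by
  have hc' : ∀ u v, u ≠ v → 0 ≤ c u v := fun u v h => (hc u v h).le
  have hk : 2 ≤ k := by have := Wk1.period_pos; omega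
  obtain ⟨i0, hi0, honce⟩ := Wk.exists_visited_once (by omega)
  have hi0s : i0 ≠ s := by
    rintro rfl
    obtain ⟨t, ht, hts, hseq⟩ := hmulti
    exact hts ((honce t hseq).eq_of_lt_of_lt ht hi0)
  have hRk : Wk.R c = Wk.duration c :=
    Wk.R_eq_duration c hc' htri Wk strictMono_id (fun _ => rfl)
      (fun d => by obtain ⟨r, -, rfl⟩ := Wk.covers d; exact ⟨r, rfl, fun y _ => ⟨y, rfl⟩⟩)
      honce (fun _ _ => rfl)
  have hvisit : ∀ d, ∃ r < k, r ≠ s ∧ Wk.seq r = d := fun d => by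
    by_cases hd : Wk.seq s = d
    · obtain ⟨t, ht, hts, hseq⟩ := hmulti
      exact ⟨t, ht, hts, hseq.trans hd⟩
    · obtain ⟨r, hr, rfl⟩ := Wk.covers d
      exact ⟨r, hr, fun h => hd (h ▸ rfl), rfl⟩
  have hRbar : Wbar.R c = Wk.duration c := by
    obtain ⟨x, a, hx, hwin⟩ := exists_concatPos_window (p := p) hk hs hq hi0 hi0s
    have hseq := Wk.seq_concat Wk1 Wbar hsc1 hsc2 hb1 hb2
    refine Wbar.R_eq_duration c hc' htri Wk (StepOrSkip.strictMono (stepOrSkip_concatPos hk hs hq))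
      hseq (fun d => ?_) (fun t ht => ?_) (fun u hu => by rw [hseq, hwin u hu])
    · obtain ⟨r, hr, hrs, rfl⟩ := hvisit d
      exact ⟨r, rfl, fun y hy => mem_range_concatPos hk hs hq (by rwa [hy, Nat.mod_eq_of_lt hr])⟩
    · rw [← Wk.seq_mod x, show x % k = i0 % k from hx, Wk.seq_mod] at ht
      exact (honce t ht).trans hx.symm
  rw [hRbar, hRk]

/-- concatenating `q ≥ 1` copies of an optimal walk `W*(k)`
(`n+1 ≤ k ≤ 2n-1`) with `p ≥ 0` copies of a shortcut walk `W(k-1)` of `W*(k)`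
yields a walk whose revisit time equals `R(W*(k))`. -/
theorem concat_optimal_with_shortcut
    (n k q p : ℕ) (hn : 2 ≤ n) (hk1 : n + 1 ≤ k) (hk2 : k ≤ 2 * n - 1) (hq : 1 ≤ q)
    (c : Fin n → Fin n → ℝ)
    (hc : ∀ u v : Fin n, u ≠ v → 0 < c u v)
    (htri : ∀ u v w : Fin n, c u w ≤ c u v + c v w)
    (Wk : CWalk n k) (hopt : Wk.R c = Rstar n c k)
    -- `W(k-1)` is obtained by shortcutting the revisit at position `s`
    (s : ℕ) (hs : s < k)
    (hmulti : ∃ t < k, t ≠ s ∧ Wk.seq t = Wk.seq s)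
    (Wk1 : CWalk n (k - 1))
    (hsc1 : ∀ j < s, Wk1.seq j = Wk.seq j)
    (hsc2 : ∀ j, s ≤ j → j < k - 1 → Wk1.seq j = Wk.seq (j + 1))
    -- `W̄` is `q` copies of `W*(k)` followed by `p` copies of `W(k-1)`
    (Wbar : CWalk n (q * k + p * (k - 1)))
    (hb1 : ∀ i < q * k, Wbar.seq i = Wk.seq (i % k))
    (hb2 : ∀ j < p * (k - 1), Wbar.seq (q * k + j) = Wk1.seq (j % (k - 1))) :
    Wbar.R c = Wk.R c :=
  concat_optimal_with_shortcut_general n k q p hk2 hq c hc htri Wk s hs hmulti Wk1 hsc1 hsc2 Wbar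
    hb1 hb2
end
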